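/- The equation τ = 4·tanh(τ/2) has exactly one strictly positive real solution τ*, and its solution set in ℝ is {−τ*, 0, τ*}. -/

import Mathlib

open Real

private noncomputable def Fc : ℝ → ℝ := fun x => 2 * Real.sinh x - x * Real.cosh x

private lemma Fc_hasDerivAt (x : ℝ) :
    HasDerivAt Fc (Real.cosh x - x * Real.sinh x) x := by
  have h : HasDerivAt (fun x : ℝ => 2 * Real.sinh x - x * Real.cosh x)
      (2 * Real.cosh x - (1 * Real.cosh x + x * Real.sinh x)) x := by
    exact ((Real.hasDerivAt_sinh x).const_mul 2).sub
      ((hasDerivAt_id x).mul (Real.hasDerivAt_cosh x))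
  unfold Fc
  convert h using 1
  ring

private lemma Fc_deriv : deriv Fc = fun x => Real.cosh x - x * Real.sinh x := by
  funext x; exact (Fc_hasDerivAt x).deriv

private lemma Fc_deriv2 (x : ℝ) : deriv (deriv Fc) x = -(x * Real.cosh x) := by
  rw [Fc_deriv]
  have h : HasDerivAt (fun x : ℝ => Real.cosh x - x * Real.sinh x)
      (Real.sinh x - (1 * Real.sinh x + x * Real.cosh x)) x :=
    (Real.hasDerivAt_cosh x).sub ((hasDerivAt_id x).mul (Real.hasDerivAt_sinh x))
  rw [h.deriv]; ring

private lemma Fc_cont : Continuous Fc :=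
  (continuous_const.mul Real.continuous_sinh).sub (continuous_id.mul Real.continuous_cosh)

private lemma Fc_concave : StrictConcaveOn ℝ (Set.Ici (0:ℝ)) Fc := by
  apply strictConcaveOn_of_deriv2_neg (convex_Ici 0) Fc_cont.continuousOn
  intro x hx
  rw [interior_Ici] at hx
  have h2 : deriv^[2] Fc x = deriv (deriv Fc) x := by
    simp [Function.iterate_succ, Function.iterate_one]
  rw [h2, Fc_deriv2]
  have := Real.cosh_pos x
  nlinarith [hx.out]

private lemma Fc_unique {a b : ℝ} (ha : 0 < a) (hb : 0 < b)
    (hFa : Fc a = 0) (hFb : Fc b = 0) : a = b := by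
  by_contra hne
  wlog hab : a < b generalizing a b
  · exact this hb ha hFb hFa (Ne.symm hne) (lt_of_le_of_ne (not_lt.1 hab) (Ne.symm hne))
  -- a = (1 - a/b) • 0 + (a/b) • b
  have hF0 : Fc 0 = 0 := by simp [Fc]
  have ht : 0 < a / b := div_pos ha hb
  have ht1 : a / b < 1 := (div_lt_one hb).2 hab
  have key := Fc_concave.2 (Set.self_mem_Ici) (Set.mem_Ici.2 hb.le) hb.ne
    (by linarith : (0:ℝ) < 1 - a / b) ht (by ring)
  rw [smul_eq_mul, smul_eq_mul, smul_eq_mul, smul_eq_mul] at key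
  have : (1 - a / b) * 0 + a / b * b = a := by field_simp; ring
  rw [this, hF0, hFb] at key
  linarith

private lemma sol_iff (τ : ℝ) : τ = 4 * Real.tanh (τ / 2) ↔ Fc (τ / 2) = 0 := by
  have hc := Real.cosh_pos (τ / 2)
  rw [Real.tanh_eq_sinh_div_cosh, Fc]
  constructor
  · intro h
    field_simp at h
    nlinarith
  · intro h
    have : τ * Real.cosh (τ / 2) = 4 * Real.sinh (τ / 2) := by nlinarith
    field_simp
    linarith

theorem stmt0 :
    ∃ τs : ℝ, 0 < τs ∧ τs = 4 * Real.tanh (τs / 2) ∧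
      (∀ τ : ℝ, 0 < τ → τ = 4 * Real.tanh (τ / 2) → τ = τs) ∧
      {τ : ℝ | τ = 4 * Real.tanh (τ / 2)} = {-τs, 0, τs} := by
  have he : (2.7182818283 : ℝ) < Real.exp 1 := Real.exp_one_gt_d9
  have he2 : (0:ℝ) < Real.exp 1 := by linarith
  have hF1 : 0 < Fc 1 := by
    simp only [Fc, Real.sinh_eq, Real.cosh_eq]
    rw [Real.exp_neg]
    have h1 : Real.exp 1 * Real.exp 1 > 3 := by nlinarith
    have hinv : Real.exp 1 * (Real.exp 1)⁻¹ = 1 := mul_inv_cancel₀ (ne_of_gt he2)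
    have hinvpos : (0:ℝ) < (Real.exp 1)⁻¹ := inv_pos.2 he2
    nlinarith
  have hF2 : Fc 2 < 0 := by
    simp only [Fc, Real.sinh_eq, Real.cosh_eq]
    have : (0:ℝ) < Real.exp (-2) := Real.exp_pos _
    nlinarith
  obtain ⟨x₀, hx₀mem, hx₀⟩ : ∃ x₀ ∈ Set.Icc (1:ℝ) 2, Fc x₀ = 0 := by
    have := intermediate_value_Icc' (by norm_num : (1:ℝ) ≤ 2) Fc_cont.continuousOn
    exact this ⟨hF2.le, hF1.le⟩
  have hx₀pos : 0 < x₀ := lt_of_lt_of_le one_pos hx₀mem.1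
  refine ⟨2 * x₀, by linarith, ?_, ?_, ?_⟩
  · rw [sol_iff]
    simpa using hx₀
  · intro τ hτ hsol
    rw [sol_iff] at hsol
    have := Fc_unique (by linarith : (0:ℝ) < τ / 2) hx₀pos hsol hx₀
    linarith
  · ext τ
    simp only [Set.mem_setOf_eq, Set.mem_insert_iff, Set.mem_singleton_iff]
    constructor
    · intro hsol
      rcases lt_trichotomy τ 0 with h | h | h
      · left
        have hneg : -τ = 4 * Real.tanh (-τ / 2) := by
          rw [neg_div, Real.tanh_neg]; linarith
        rw [sol_iff] at hneg
        have := Fc_unique (by linarith : (0:ℝ) < -τ / 2) hx₀pos hneg hx₀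
        linarith
      · right; left; exact h
      · right; right
        rw [sol_iff] at hsol
        have := Fc_unique (by linarith : (0:ℝ) < τ / 2) hx₀pos hsol hx₀
        linarith
    · rintro (rfl | rfl | rfl)
      · rw [sol_iff]
        have : -(2 * x₀) / 2 = -x₀ := by ring
        rw [this]
        simp only [Fc, Real.sinh_neg, Real.cosh_neg]
        have : Fc x₀ = 0 := hx₀
        simp only [Fc] at this
        linarith
      · simp
      · rw [sol_iff]; simpa using hx₀
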